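/- Fix x ∈ X^n of type P_x and a stochastic matrix V: X → Y such that the V-shell T_V(x) is nonempty. Then (n+1)^{-|X||Y|} · exp(n·H(V|P_x)) ≤ |T_V(x)| ≤ exp(n·H(V|P_x)), where H(V|P_x) = -Σ_a P_x(a) Σ_b V(b|a) log V(b|a) is the conditional entropy. -/

import Mathlib

open Finset Nat

lemma fact_pow_le (j k : ℕ) : k ! * k ^ j ≤ j ! * k ^ k := by
  rcases le_total j k with h | h
  · have key : k ! ≤ j ! * k ^ (k - j) := by
      induction k, h using Nat.le_induction with
      | base => simp
      | succ k hk ih =>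
        have h1 : k + 1 - j = (k - j) + 1 := by omega
        calc (k+1)! = (k+1) * k ! := Nat.factorial_succ k
          _ ≤ (k+1) * (j ! * k ^ (k - j)) := Nat.mul_le_mul_left _ ih
          _ ≤ (k+1) * (j ! * (k+1) ^ (k - j)) := by
              exact Nat.mul_le_mul_left _ (Nat.mul_le_mul_left _
                (Nat.pow_le_pow_left (Nat.le_succ k) _))
          _ = j ! * (k+1) ^ (k + 1 - j) := by rw [h1, pow_succ]; ring
    calc k ! * k ^ j ≤ (j ! * k ^ (k - j)) * k ^ j := Nat.mul_le_mul_right _ key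
      _ = j ! * k ^ k := by rw [mul_assoc, ← pow_add]; congr 2; omega
  · have key : k ! * k ^ (j - k) ≤ j ! := by
      induction j, h using Nat.le_induction with
      | base => simp
      | succ j hj ih =>
        have h1 : j + 1 - k = (j - k) + 1 := by omega
        calc k ! * k ^ (j + 1 - k) = (k ! * k ^ (j - k)) * k := by rw [h1, pow_succ]; ring
          _ ≤ j ! * k := Nat.mul_le_mul_right _ ih
          _ ≤ j ! * (j + 1) := Nat.mul_le_mul_left _ (by omega)
          _ = (j+1)! := by rw [Nat.factorial_succ]; ring
    calc k ! * k ^ j = (k ! * k ^ (j - k)) * k ^ k := by rw [mul_assoc, ← pow_add]; congr 2; omega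
      _ ≤ j ! * k ^ k := Nat.mul_le_mul_right _ key

lemma card_filter_subtype {ι : Type*} [Fintype ι] (p q : ι → Prop)
    [DecidablePred p] [DecidablePred q] [Fintype {i // p i}] :
    (univ.filter fun j : {i // p i} => q j.1).card = (univ.filter fun i => p i ∧ q i).card := by
  apply Finset.card_bij (fun j _ => j.1)
  · intro j hj
    simp only [mem_filter, mem_univ, true_and] at hj ⊢
    exact ⟨j.2, hj⟩
  · intro a _ b _ hab; exact Subtype.ext hab
  · intro i hi
    simp only [mem_filter, mem_univ, true_and] at hi
    exact ⟨⟨i, hi.1⟩, by simp [hi.2], rfl⟩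

lemma card_fiber_count_aux {Y : Type*} [Fintype Y] [DecidableEq Y] (s : Finset Y) :
    ∀ (ι : Type u) [Fintype ι] [DecidableEq ι] (m : Y → ℕ), (∑ b ∈ s, m b = Fintype.card ι) →
    (univ.filter fun g : ι → Y =>
        (∀ i, g i ∈ s) ∧ ∀ b ∈ s, (univ.filter fun i => g i = b).card = m b).card
      = Nat.multinomial s m := by
  induction s using Finset.cons_induction with
  | empty =>
    intro ι _ _ m hm
    simp only [sum_empty] at hm
    have hie : IsEmpty ι := Fintype.card_eq_zero_iff.mp hm.symm
    rw [Nat.multinomial_empty, filter_true_of_mem, Finset.card_univ, Fintype.card_fun, ← hm,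
      pow_zero]
    intro g _
    exact ⟨fun i => isEmptyElim i, fun b hb => by simp at hb⟩
  | cons b₀ t hb ih =>
    intro ι _ _ m hm
    rw [Finset.sum_cons] at hm
    have step1 : (univ.filter fun g : ι → Y =>
        (∀ i, g i ∈ cons b₀ t hb) ∧ ∀ b ∈ cons b₀ t hb,
          (univ.filter fun i => g i = b).card = m b).card
        = ∑ S ∈ powersetCard (m b₀) (univ : Finset ι),
            (univ.filter fun g : ι → Y =>
              ((∀ i, g i ∈ cons b₀ t hb) ∧ ∀ b ∈ cons b₀ t hb,
                (univ.filter fun i => g i = b).card = m b) ∧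
              univ.filter (fun i => g i = b₀) = S).card := by
      simp_rw [← filter_filter]
      apply card_eq_sum_card_fiberwise
      intro g hg
      simp only [mem_coe, mem_filter, mem_univ, true_and] at hg
      rw [mem_coe, mem_powersetCard]
      exact ⟨subset_univ _, hg.2 b₀ (mem_cons_self _ _)⟩
    have step2 : ∀ S ∈ powersetCard (m b₀) (univ : Finset ι),
        (univ.filter fun g : ι → Y =>
              ((∀ i, g i ∈ cons b₀ t hb) ∧ ∀ b ∈ cons b₀ t hb,
                (univ.filter fun i => g i = b).card = m b) ∧
              univ.filter (fun i => g i = b₀) = S).card = Nat.multinomial t m := by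
      intro S hS
      rw [mem_powersetCard] at hS
      have hb0t : b₀ ∉ t := hb
      have hScard : S.card = m b₀ := hS.2
      have hcard : ∑ b ∈ t, m b = Fintype.card {i // i ∈ Sᶜ} := by
        rw [Fintype.card_of_subtype Sᶜ (fun x => Iff.rfl), card_compl, hScard]
        exact Nat.eq_sub_of_add_eq' hm
      have hIH := ih {i // i ∈ Sᶜ} m hcard
      refine Eq.trans ?_ hIH
      refine Finset.card_bij' (fun g _ => fun j : {i // i ∈ Sᶜ} => g j.1)
        (fun h _ => fun i : ι => if hi : i ∈ Sᶜ then h ⟨i, hi⟩ else b₀) ?_ ?_ ?_ ?_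
      · -- forward maps into target
        intro g hg
        simp only [mem_filter, mem_univ, true_and] at hg ⊢
        obtain ⟨⟨hmem, hcnt⟩, hfib⟩ := hg
        have hnb₀ : ∀ j : {i // i ∈ Sᶜ}, g j.1 ≠ b₀ := by
          intro j hj
          have hj1 : j.1 ∈ filter (fun i => g i = b₀) univ := mem_filter.mpr ⟨mem_univ _, hj⟩
          rw [hfib] at hj1
          exact (mem_compl.mp j.2) hj1
        refine ⟨fun j => ?_, fun b hbt => ?_⟩
        · rcases mem_cons.mp (hmem j.1) with h | h
          · exact absurd h (hnb₀ j)
          · exact h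
        · have hbne : b ≠ b₀ := fun h => hb0t (h ▸ hbt)
          rw [card_filter_subtype (fun i => i ∈ Sᶜ) (fun i => g i = b)]
          rw [← hcnt b (mem_cons_of_mem hbt)]
          congr 1
          ext i
          simp only [mem_filter, mem_univ, true_and, and_iff_right_iff_imp]
          intro hgi
          rw [mem_compl]
          intro hiS
          rw [← hfib, mem_filter] at hiS
          exact hbne (hgi ▸ hiS.2)
      · -- backward maps into source
        intro h hh
        simp only [mem_filter, mem_univ, true_and] at hh ⊢
        obtain ⟨hmem, hcnt⟩ := hh
        have hval : ∀ (i : ι) (hi : i ∈ Sᶜ),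
            (if hi : i ∈ Sᶜ then h ⟨i, hi⟩ else b₀) = h ⟨i, hi⟩ := by
          intro i hi; rw [dif_pos hi]
        have hfib : (univ.filter fun i : ι =>
            (if hi : i ∈ Sᶜ then h ⟨i, hi⟩ else b₀) = b₀) = S := by
          ext i
          simp only [mem_filter, mem_univ, true_and]
          by_cases hi : i ∈ Sᶜ
          · rw [dif_pos hi]
            constructor
            · intro hcon; exact absurd (hcon ▸ hmem ⟨i, hi⟩) hb0t
            · intro hiS; exact absurd hiS (mem_compl.mp hi)
          · rw [dif_neg hi]
            simp only [true_iff]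
            rw [mem_compl, not_not] at hi
            exact hi
        refine ⟨⟨fun i => ?_, fun b hbc => ?_⟩, hfib⟩
        · by_cases hi : i ∈ Sᶜ
          · rw [dif_pos hi]; exact mem_cons_of_mem (hmem _)
          · rw [dif_neg hi]; exact mem_cons_self _ _
        · rcases mem_cons.mp hbc with rfl | hbt
          · rw [hfib, hScard]
          · have hbne : b ≠ b₀ := fun hbeq => hb0t (hbeq ▸ hbt)
            rw [← hcnt b hbt]
            symm
            apply Finset.card_bij (fun (j : {i // i ∈ Sᶜ}) _ => j.1)
            · intro j hj
              simp only [mem_filter, mem_univ, true_and] at hj ⊢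
              rw [dif_pos j.2]
              rwa [show (⟨j.1, j.2⟩ : {i // i ∈ Sᶜ}) = j from Subtype.ext rfl]
            · intro a _ c _ hac; exact Subtype.ext hac
            · intro i hi
              simp only [mem_filter, mem_univ, true_and] at hi
              by_cases his : i ∈ Sᶜ
              · refine ⟨⟨i, his⟩, ?_, rfl⟩
                simp only [mem_filter, mem_univ, true_and]
                rw [dif_pos his] at hi
                exact hi
              · rw [dif_neg his] at hi
                exact absurd hi.symm hbne
      · -- left inverse
        intro g hg
        dsimp only
        simp only [mem_filter, mem_univ, true_and] at hg
        funext i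
        by_cases hi : i ∈ Sᶜ
        · rw [dif_pos hi]
        · rw [dif_neg hi]
          rw [mem_compl, not_not] at hi
          rw [← hg.2, mem_filter] at hi
          exact hi.2.symm
      · -- right inverse
        intro h _
        dsimp only
        funext j
        rw [dif_pos j.2]
    rw [step1, Finset.sum_congr rfl step2, sum_const, card_powersetCard, Finset.card_univ,
      Nat.multinomial_cons, hm, smul_eq_mul]
open Finset Nat

lemma card_fiber_count {Y : Type*} [Fintype Y] [DecidableEq Y] (ι : Type) [Fintype ι]
    [DecidableEq ι] (m : Y → ℕ) (hm : ∑ b, m b = Fintype.card ι) :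
    (univ.filter fun g : ι → Y => ∀ b, (univ.filter fun i => g i = b).card = m b).card
      = Nat.multinomial univ m := by
  rw [← card_fiber_count_aux univ ι m hm]
  congr 1
  apply filter_congr
  intro g _
  simp

lemma shell_card_eq_prod {X Y : Type*} [Fintype X] [Fintype Y] [DecidableEq X] [DecidableEq Y]
    (n : ℕ) (x : Fin n → X) (k : X → Y → ℕ)
    (hk : ∀ a, ∑ b, k a b = (univ.filter fun i => x i = a).card) :
    (univ.filter fun y : Fin n → Y =>
        ∀ a b, (univ.filter fun i => x i = a ∧ y i = b).card = k a b).card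
      = ∏ a, Nat.multinomial univ (k a) := by
  have stepA : (univ.filter fun y : Fin n → Y =>
        ∀ a b, (univ.filter fun i => x i = a ∧ y i = b).card = k a b)
      = (univ.filter fun y : Fin n → Y =>
        ∀ a b, (univ.filter fun j : {i // x i = a} => y j.1 = b).card = k a b) := by
    apply filter_congr
    intro y _
    constructor
    · intro h a b; rw [card_filter_subtype (fun i => x i = a) (fun i => y i = b)]; exact h a b
    · intro h a b; rw [← card_filter_subtype (fun i => x i = a) (fun i => y i = b)]; exact h a b
  rw [stepA]
  have stepB : (univ.filter fun y : Fin n → Y =>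
        ∀ a b, (univ.filter fun j : {i // x i = a} => y j.1 = b).card = k a b).card
      = (univ.filter fun g : (∀ a, ({i // x i = a} → Y)) =>
        ∀ a b, (univ.filter fun j : {i // x i = a} => g a j = b).card = k a b).card := by
    refine Finset.card_bij' (fun y _ => fun a (j : {i // x i = a}) => y j.1)
      (fun g _ => fun i => g (x i) ⟨i, rfl⟩) ?_ ?_ ?_ ?_
    · intro y hy
      simp only [mem_filter, mem_univ, true_and] at hy ⊢
      exact hy
    · intro g hg
      simp only [mem_filter, mem_univ, true_and] at hg ⊢
      intro a b
      rw [← hg a b]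
      congr 1
      apply filter_congr
      rintro ⟨i, hi⟩ _
      subst hi
      rfl
    · intro y _; funext i; rfl
    · intro g _
      funext a j
      obtain ⟨i, hi⟩ := j
      subst hi
      rfl
  rw [stepB]
  have stepC : (univ.filter fun g : (∀ a, ({i // x i = a} → Y)) =>
        ∀ a b, (univ.filter fun j : {i // x i = a} => g a j = b).card = k a b)
      = Fintype.piFinset (fun a => univ.filter fun f : {i // x i = a} → Y =>
          ∀ b, (univ.filter fun j : {i // x i = a} => f j = b).card = k a b) := by
    ext g
    simp only [mem_filter, mem_univ, true_and, Fintype.mem_piFinset]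
  rw [stepC, Fintype.card_piFinset]
  apply Finset.prod_congr rfl
  intro a _
  apply card_fiber_count
  rw [hk a]
  exact (Fintype.card_of_subtype (p := fun i => x i = a) (univ.filter fun i => x i = a)
    (fun i => by simp)).symm


lemma nat_maxterm {Y : Type*} [Fintype Y] (j k : Y → ℕ) (h : ∑ b, j b = ∑ b, k b) :
    Nat.multinomial univ j * ∏ b, (k b) ^ (j b)
      ≤ Nat.multinomial univ k * ∏ b, (k b) ^ (k b) := by
  have hF : 0 < (∏ b, (j b)!) * (∏ b, (k b)!) := by positivity
  apply Nat.le_of_mul_le_mul_left _ hF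
  calc (∏ b, (j b)!) * (∏ b, (k b)!) * (Nat.multinomial univ j * ∏ b, (k b) ^ (j b))
      = (∑ b, j b)! * ∏ b, ((k b)! * (k b) ^ (j b)) := by
        rw [Finset.prod_mul_distrib, ← Nat.multinomial_spec univ j]; ring
    _ ≤ (∑ b, j b)! * ∏ b, ((j b)! * (k b) ^ (k b)) :=
        Nat.mul_le_mul_left _ (Finset.prod_le_prod' fun b _ => fact_pow_le (j b) (k b))
    _ = (∏ b, (j b)!) * (∏ b, (k b)!) * (Nat.multinomial univ k * ∏ b, (k b) ^ (k b)) := by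
        rw [h, Finset.prod_mul_distrib, ← Nat.multinomial_spec univ k]; ring

lemma per_letter {Y : Type*} [Fintype Y] [DecidableEq Y] (N : ℕ) (p : Y → ℝ)
    (hp0 : ∀ b, 0 ≤ p b) (hp1 : ∑ b, p b = 1) (k : Y → ℕ)
    (hks : ∑ b, k b = N) (hk : ∀ b, (k b : ℝ) = N * p b) :
    ((Nat.multinomial univ k : ℝ) * ∏ b, p b ^ (k b) ≤ 1) ∧
    (1 ≤ ((N : ℝ)+1) ^ (Fintype.card Y) * ((Nat.multinomial univ k : ℝ) * ∏ b, p b ^ (k b))) := by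
  have hterm_nonneg : ∀ m : Y → ℕ, 0 ≤ (Nat.multinomial univ m : ℝ) * ∏ b, p b ^ (m b) := by
    intro m
    apply mul_nonneg (Nat.cast_nonneg _)
    exact Finset.prod_nonneg fun b _ => pow_nonneg (hp0 b) _
  have hkmem : k ∈ piAntidiag (univ : Finset Y) N :=
    mem_piAntidiag.mpr ⟨hks, fun i _ => mem_univ i⟩
  have expand : (1:ℝ) = ∑ m ∈ piAntidiag (univ : Finset Y) N,
      (Nat.multinomial univ m : ℝ) * ∏ b, p b ^ (m b) := by
    rw [← one_pow N, ← hp1, Finset.sum_pow_eq_sum_piAntidiag]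
  constructor
  · rw [expand]
    exact Finset.single_le_sum (fun m _ => hterm_nonneg m) hkmem
  · have hmax : ∀ m ∈ piAntidiag (univ : Finset Y) N,
        (Nat.multinomial univ m : ℝ) * ∏ b, p b ^ (m b)
          ≤ (Nat.multinomial univ k : ℝ) * ∏ b, p b ^ (k b) := by
      intro m hm
      rw [mem_piAntidiag] at hm
      rcases Nat.eq_zero_or_pos N with hN | hN
      · have hm0 : m = k := by
          funext b
          have h1 : m b = 0 := by
            have := Finset.sum_eq_zero_iff.mp (hm.1.trans hN)
            exact this b (mem_univ b)
          have h2 : k b = 0 := by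
            have := Finset.sum_eq_zero_iff.mp (hks.trans hN)
            exact this b (mem_univ b)
          rw [h1, h2]
        rw [hm0]
      · have hnat := nat_maxterm m k (by rw [hm.1, hks])
        have hreal : (Nat.multinomial univ m : ℝ) * ∏ b, (k b : ℝ) ^ (m b)
            ≤ (Nat.multinomial univ k : ℝ) * ∏ b, (k b : ℝ) ^ (k b) := by
          exact_mod_cast hnat
        have hprod : ∀ (w : Y → ℕ), (∑ b, w b = N) →
            ∏ b, (k b : ℝ) ^ (w b) = (N:ℝ)^N * ∏ b, p b ^ (w b) := by
          intro w hw
          calc ∏ b, (k b : ℝ) ^ (w b) = ∏ b, ((N:ℝ) ^ (w b) * p b ^ (w b)) := by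
                apply Finset.prod_congr rfl
                intro b _
                rw [hk b, mul_pow]
            _ = (N:ℝ)^N * ∏ b, p b ^ (w b) := by
                rw [Finset.prod_mul_distrib, Finset.prod_pow_eq_pow_sum, hw]
        rw [hprod m hm.1, hprod k hks] at hreal
        have hNpos : (0:ℝ) < (N:ℝ)^N := by positivity
        have h2 : (N:ℝ)^N * ((Nat.multinomial univ m : ℝ) * ∏ b, p b ^ (m b))
            ≤ (N:ℝ)^N * ((Nat.multinomial univ k : ℝ) * ∏ b, p b ^ (k b)) := by
          calc (N:ℝ)^N * ((Nat.multinomial univ m : ℝ) * ∏ b, p b ^ (m b))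
              = (Nat.multinomial univ m : ℝ) * ((N:ℝ)^N * ∏ b, p b ^ (m b)) := by ring
            _ ≤ (Nat.multinomial univ k : ℝ) * ((N:ℝ)^N * ∏ b, p b ^ (k b)) := hreal
            _ = (N:ℝ)^N * ((Nat.multinomial univ k : ℝ) * ∏ b, p b ^ (k b)) := by ring
        exact le_of_mul_le_mul_left h2 hNpos
    have hcard : ((piAntidiag (univ : Finset Y) N).card : ℝ) ≤ ((N:ℝ)+1) ^ (Fintype.card Y) := by
      have hsub : piAntidiag (univ : Finset Y) N ⊆
          Fintype.piFinset (fun _ : Y => Finset.range (N+1)) := by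
        intro m hm
        rw [mem_piAntidiag] at hm
        rw [Fintype.mem_piFinset]
        intro b
        rw [Finset.mem_range]
        have : m b ≤ N := by
          rw [← hm.1]
          exact Finset.single_le_sum (fun c _ => Nat.zero_le _) (mem_univ b)
        omega
      have := card_le_card hsub
      rw [Fintype.card_piFinset] at this
      simp only [Finset.card_range, Finset.prod_const, Finset.card_univ] at this
      calc ((piAntidiag (univ : Finset Y) N).card : ℝ) ≤ ((N+1) ^ (Fintype.card Y) : ℕ) := by
            exact_mod_cast this
        _ = ((N:ℝ)+1) ^ (Fintype.card Y) := by push_cast; ring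
    calc (1:ℝ) = ∑ m ∈ piAntidiag (univ : Finset Y) N,
          (Nat.multinomial univ m : ℝ) * ∏ b, p b ^ (m b) := expand
      _ ≤ ∑ _m ∈ piAntidiag (univ : Finset Y) N,
          (Nat.multinomial univ k : ℝ) * ∏ b, p b ^ (k b) := Finset.sum_le_sum hmax
      _ = ((piAntidiag (univ : Finset Y) N).card : ℝ) *
          ((Nat.multinomial univ k : ℝ) * ∏ b, p b ^ (k b)) := by
          rw [Finset.sum_const, nsmul_eq_mul]
      _ ≤ ((N:ℝ)+1) ^ (Fintype.card Y) *
          ((Nat.multinomial univ k : ℝ) * ∏ b, p b ^ (k b)) :=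
          mul_le_mul_of_nonneg_right hcard (hterm_nonneg k)

/-- Size of a `V`-shell: for `x ∈ X^n` and a stochastic matrix `V : X → Y` with
`T_V(x)` nonempty, `(n+1)^{-|X||Y|} exp(n H(V|P_x)) ≤ |T_V(x)| ≤ exp(n H(V|P_x))`. -/
theorem V_shell_size {X Y : Type*} [Fintype X] [Fintype Y] [DecidableEq X] [DecidableEq Y]
    (n : ℕ) (hn : 0 < n) (x : Fin n → X)
    (V : X → Y → ℝ) (hV0 : ∀ a b, 0 ≤ V a b) (hV1 : ∀ a, ∑ b, V a b = 1)
    (hne : (univ.filter fun y : Fin n → Y =>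
        ∀ a b, ((univ.filter fun i => x i = a ∧ y i = b).card : ℝ) =
          ((univ.filter fun i => x i = a).card : ℝ) * V a b).Nonempty) :
    ((n : ℝ) + 1) ^ (-((Fintype.card X * Fintype.card Y : ℕ) : ℤ)) *
        Real.exp ((n : ℝ) *
          (∑ a, (((univ.filter fun i => x i = a).card : ℝ) / n) *
            (-∑ b, V a b * Real.log (V a b)))) ≤
      ((univ.filter fun y : Fin n → Y =>
        ∀ a b, ((univ.filter fun i => x i = a ∧ y i = b).card : ℝ) =
          ((univ.filter fun i => x i = a).card : ℝ) * V a b).card : ℝ) ∧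
    ((univ.filter fun y : Fin n → Y =>
        ∀ a b, ((univ.filter fun i => x i = a ∧ y i = b).card : ℝ) =
          ((univ.filter fun i => x i = a).card : ℝ) * V a b).card : ℝ) ≤
      Real.exp ((n : ℝ) *
        (∑ a, (((univ.filter fun i => x i = a).card : ℝ) / n) *
          (-∑ b, V a b * Real.log (V a b)))) := by
  classical
  obtain ⟨y₀, hy₀⟩ := hne
  rw [mem_filter] at hy₀
  set k : X → Y → ℕ := fun a b => (univ.filter fun i => x i = a ∧ y₀ i = b).card with hkdef
  have hnne : (n:ℝ) ≠ 0 := Nat.cast_ne_zero.mpr hn.ne'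
  have hk : ∀ a b, (k a b : ℝ) = ((univ.filter fun i => x i = a).card : ℝ) * V a b :=
    fun a b => hy₀.2 a b
  have hks : ∀ a, ∑ b, k a b = (univ.filter fun i => x i = a).card := by
    intro a
    rw [card_eq_sum_card_fiberwise (f := y₀) (t := univ)
      (s := univ.filter fun i => x i = a) (fun _ _ => mem_univ _)]
    apply Finset.sum_congr rfl
    intro b _
    rw [filter_filter]
  have hNn : ∀ a, (univ.filter fun i => x i = a).card ≤ n := by
    intro a
    calc (univ.filter fun i => x i = a).card ≤ (univ : Finset (Fin n)).card :=
          card_le_card (filter_subset _ _)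
      _ = n := by simp
  -- rewrite the shell with natural-number conditions
  have hshell : (univ.filter fun y : Fin n → Y =>
        ∀ a b, ((univ.filter fun i => x i = a ∧ y i = b).card : ℝ) =
          ((univ.filter fun i => x i = a).card : ℝ) * V a b)
      = (univ.filter fun y : Fin n → Y =>
        ∀ a b, (univ.filter fun i => x i = a ∧ y i = b).card = k a b) := by
    apply filter_congr
    intro y _
    constructor
    · intro h a b
      have := (h a b).trans (hk a b).symm
      exact_mod_cast this
    · intro h a b
      rw [h a b]
      exact hk a b
  have hcard : (univ.filter fun y : Fin n → Y =>
        ∀ a b, (univ.filter fun i => x i = a ∧ y i = b).card = k a b).card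
      = ∏ a, Nat.multinomial univ (k a) := shell_card_eq_prod n x k hks
  -- per-letter bounds
  have hPL : ∀ a, ((Nat.multinomial univ (k a) : ℝ) * ∏ b, V a b ^ (k a b) ≤ 1) ∧
      (1 ≤ (((univ.filter fun i => x i = a).card : ℝ)+1) ^ (Fintype.card Y) *
        ((Nat.multinomial univ (k a) : ℝ) * ∏ b, V a b ^ (k a b))) := by
    intro a
    exact per_letter _ (V a) (hV0 a) (hV1 a) (k a) (hks a) (hk a)
  have hE_nonneg : ∀ a, (0:ℝ) ≤ (Nat.multinomial univ (k a) : ℝ) * ∏ b, V a b ^ (k a b) := by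
    intro a
    apply mul_nonneg (Nat.cast_nonneg _)
    exact Finset.prod_nonneg fun b _ => pow_nonneg (hV0 a b) _
  -- the exponential identity
  set S : ℝ := ∑ a, ∑ b, (k a b : ℝ) * Real.log (V a b) with hSdef
  have hexp : (n : ℝ) * (∑ a, (((univ.filter fun i => x i = a).card : ℝ) / n) *
      (-∑ b, V a b * Real.log (V a b))) = -S := by
    rw [hSdef, Finset.mul_sum, ← Finset.sum_neg_distrib]
    apply Finset.sum_congr rfl
    intro a _
    have h1 : ((univ.filter fun i => x i = a).card : ℝ) * (∑ b, V a b * Real.log (V a b))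
        = ∑ b, (k a b : ℝ) * Real.log (V a b) := by
      rw [Finset.mul_sum]
      apply Finset.sum_congr rfl
      intro b _
      rw [hk a b]; ring
    calc (n:ℝ) * ((((univ.filter fun i => x i = a).card : ℝ) / n) *
          (-∑ b, V a b * Real.log (V a b)))
        = (((univ.filter fun i => x i = a).card : ℝ) / n * n) *
          (-∑ b, V a b * Real.log (V a b)) := by ring
      _ = ((univ.filter fun i => x i = a).card : ℝ) * (-∑ b, V a b * Real.log (V a b)) := by
          rw [div_mul_cancel₀ _ hnne]
      _ = -∑ b, (k a b : ℝ) * Real.log (V a b) := by rw [mul_neg, h1]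
  have hprodE : ∏ a, ∏ b, V a b ^ (k a b) = Real.exp S := by
    rw [hSdef, Real.exp_sum]
    apply Finset.prod_congr rfl
    intro a _
    rw [Real.exp_sum]
    apply Finset.prod_congr rfl
    intro b _
    by_cases hV : V a b = 0
    · have hzero : (k a b : ℝ) = 0 := by
        rw [hk a b, hV, mul_zero]
      have hk0 : k a b = 0 := by exact_mod_cast hzero
      rw [hV, hk0]
      simp
    · have hVpos : 0 < V a b := lt_of_le_of_ne (hV0 a b) (Ne.symm hV)
      rw [Real.exp_nat_mul, Real.exp_log hVpos]
  have hSpos : (0:ℝ) < Real.exp S := Real.exp_pos S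
  -- main product identity
  have hmain : ((∏ a, Nat.multinomial univ (k a) : ℕ) : ℝ) * Real.exp S
      = ∏ a, ((Nat.multinomial univ (k a) : ℝ) * ∏ b, V a b ^ (k a b)) := by
    rw [Finset.prod_mul_distrib, ← hprodE, Nat.cast_prod]
  rw [hshell, hcard, hexp]
  set C : ℝ := ((∏ a, Nat.multinomial univ (k a) : ℕ) : ℝ) with hCdef
  have hexp_inv : Real.exp (-S) * Real.exp S = 1 := by
    rw [← Real.exp_add, neg_add_cancel, Real.exp_zero]
  constructor
  · -- lower bound
    have hEa_lb : ∀ a, ((((n:ℝ)+1) ^ (Fintype.card Y))⁻¹)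
        ≤ (Nat.multinomial univ (k a) : ℝ) * ∏ b, V a b ^ (k a b) := by
      intro a
      have hA : (0:ℝ) < ((n:ℝ)+1) ^ (Fintype.card Y) := by positivity
      have hB : (((univ.filter fun i => x i = a).card : ℝ)+1) ^ (Fintype.card Y)
          ≤ ((n:ℝ)+1) ^ (Fintype.card Y) := by
        apply pow_le_pow_left₀ (by positivity)
        have := hNn a
        have : ((univ.filter fun i => x i = a).card : ℝ) ≤ n := by exact_mod_cast this
        linarith
      have h1A : 1 ≤ ((n:ℝ)+1) ^ (Fintype.card Y) *
          ((Nat.multinomial univ (k a) : ℝ) * ∏ b, V a b ^ (k a b)) :=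
        le_trans (hPL a).2 (mul_le_mul_of_nonneg_right hB (hE_nonneg a))
      calc ((((n:ℝ)+1) ^ (Fintype.card Y))⁻¹) = ((((n:ℝ)+1) ^ (Fintype.card Y))⁻¹) * 1 :=
            (mul_one _).symm
        _ ≤ ((((n:ℝ)+1) ^ (Fintype.card Y))⁻¹) * (((n:ℝ)+1) ^ (Fintype.card Y) *
            ((Nat.multinomial univ (k a) : ℝ) * ∏ b, V a b ^ (k a b))) :=
            mul_le_mul_of_nonneg_left h1A (inv_nonneg.mpr hA.le)
        _ = (Nat.multinomial univ (k a) : ℝ) * ∏ b, V a b ^ (k a b) := by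
            rw [← mul_assoc, inv_mul_cancel₀ hA.ne', one_mul]
    have hProd_lb : ((((n:ℝ)+1) ^ (Fintype.card Y))⁻¹) ^ (Fintype.card X) ≤ C * Real.exp S := by
      rw [hCdef, hmain]
      calc ((((n:ℝ)+1) ^ (Fintype.card Y))⁻¹) ^ (Fintype.card X)
          = ∏ _a : X, (((n:ℝ)+1) ^ (Fintype.card Y))⁻¹ := by
            rw [Finset.prod_const, Finset.card_univ]
        _ ≤ ∏ a, ((Nat.multinomial univ (k a) : ℝ) * ∏ b, V a b ^ (k a b)) :=
            Finset.prod_le_prod (fun a _ => by positivity) (fun a _ => hEa_lb a)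
    have hzp : ((n : ℝ) + 1) ^ (-((Fintype.card X * Fintype.card Y : ℕ) : ℤ))
        = ((((n:ℝ)+1) ^ (Fintype.card Y))⁻¹) ^ (Fintype.card X) := by
      rw [zpow_neg, zpow_natCast, inv_pow, ← pow_mul, mul_comm (Fintype.card X)]
    rw [hzp]
    calc ((((n:ℝ)+1) ^ (Fintype.card Y))⁻¹) ^ (Fintype.card X) * Real.exp (-S)
        ≤ (C * Real.exp S) * Real.exp (-S) :=
          mul_le_mul_of_nonneg_right hProd_lb (Real.exp_pos _).le
      _ = C := by rw [mul_assoc, ← Real.exp_add, add_neg_cancel, Real.exp_zero, mul_one]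
  · -- upper bound
    have hProd_ub : C * Real.exp S ≤ 1 := by
      rw [hCdef, hmain]
      exact Finset.prod_le_one (fun a _ => hE_nonneg a) (fun a _ => (hPL a).1)
    calc C = (C * Real.exp S) * Real.exp (-S) := by
          rw [mul_assoc, ← Real.exp_add, add_neg_cancel, Real.exp_zero, mul_one]
      _ ≤ 1 * Real.exp (-S) := mul_le_mul_of_nonneg_right hProd_ub (Real.exp_pos _).le
      _ = Real.exp (-S) := one_mul _
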